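/- arXiv:0805.0080 — 5 statements merged into one kernel-verified Lean document; each statement's English description precedes it below -/
import Mathlib

section
/- Let F ∈ GL(d,ℝ) with V² = F Fᵀ, K = det F, S symmetric with div-free property irrelevant pointwise, and ρ = K S V⁻² S where S is symmetric invertible. For a unit vector n, the pentamode phase speed satisfies v² = K n·(S ρ⁻¹ S n) = n·V² n = |Fᵀ n|², and the wave velocity c = v⁻¹ V² n can be written c = F N where N = Fᵀ n / |Fᵀ n| is a unit vector. In particular v and c depend only on F and not on S. -/
/-! The density `ρ = K S V⁻² S` is a congruence of `V⁻²` by `S`, so inverting it and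
sandwiching by `S` again cancels `S` completely: `S ρ⁻¹ S = K⁻¹ V²`. Hence
`v² = n·V² n = |Fᵀ n|²`, and `c = v⁻¹ F Fᵀ n = F N`. -/

open Matrix

namespace Matrix

variable {m n 𝕜 R : Type*} [Fintype m] [Fintype n]

theorem mul_smul_sandwich_inv_mul [DecidableEq n] [Field 𝕜] {S A : Matrix n n 𝕜} {k : 𝕜}
    (hk : k ≠ 0) (hS : IsUnit S) (hA : IsUnit A) :
    S * (k • (S * A⁻¹ * S))⁻¹ * S = k⁻¹ • A := by
  rw [isUnit_iff_isUnit_det] at hS hA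
  have hdet : IsUnit (S * A⁻¹ * S).det := by
    simpa [det_mul, det_nonsing_inv] using (hS.mul (isUnit_nonsing_inv_det A hA)).mul hS
  have := invertibleOfNonzero hk
  rw [inv_smul _ k hdet, invOf_eq_inv, mul_inv_rev, mul_inv_rev, nonsing_inv_nonsing_inv A hA]
  simp only [Matrix.mul_smul, Matrix.smul_mul, Matrix.mul_assoc, nonsing_inv_mul _ hS,
    Matrix.mul_one, mul_nonsing_inv_cancel_left _ _ hS]

theorem dotProduct_mul_transpose_mulVec [CommSemiring R] (F : Matrix m n R) (x : m → R) :
    x ⬝ᵥ (F * Fᵀ) *ᵥ x = Fᵀ *ᵥ x ⬝ᵥ Fᵀ *ᵥ x := by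
  rw [← mulVec_mulVec, ← dotProduct_transpose_mulVec Fᵀ, transpose_transpose]

end Matrix

section DotProduct

variable {ι : Type*} [Fintype ι]

theorem dotProduct_self_nonneg {R : Type*} [Ring R] [LinearOrder R] [IsStrictOrderedRing R]
    (w : ι → R) : 0 ≤ w ⬝ᵥ w :=
  Finset.sum_nonneg fun i _ => mul_self_nonneg (w i)

theorem dotProduct_inv_sqrt_smul_self {w : ι → ℝ} (hw : w ≠ 0) :
    ((√(w ⬝ᵥ w))⁻¹ • w) ⬝ᵥ ((√(w ⬝ᵥ w))⁻¹ • w) = 1 := by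
  have hpos : 0 < w ⬝ᵥ w := (dotProduct_self_nonneg w).lt_of_ne' (dotProduct_self_eq_zero.not.2 hw)
  rw [smul_dotProduct, dotProduct_smul, smul_eq_mul, smul_eq_mul, ← mul_assoc, ← mul_inv,
    Real.mul_self_sqrt hpos.le, inv_mul_cancel₀ hpos.ne']

end DotProduct

theorem pmic_speeds_independent_of_S_general {d : ℕ} (F : Matrix (Fin d) (Fin d) ℝ)
    (hdet : 0 < F.det)
    (V2 : Matrix (Fin d) (Fin d) ℝ) (hV2 : V2 = F * Fᵀ)
    (K : ℝ) (hK : K = F.det)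
    (S : Matrix (Fin d) (Fin d) ℝ) (hSinv : IsUnit S)
    (ρ : Matrix (Fin d) (Fin d) ℝ) (hρ : ρ = K • (S * V2⁻¹ * S))
    (n : Fin d → ℝ) (hn : n ⬝ᵥ n = 1)
    (v : ℝ) (hv : v = Real.sqrt (K * (n ⬝ᵥ (S * ρ⁻¹ * S).mulVec n)))
    (c : Fin d → ℝ) (hc : c = v⁻¹ • V2.mulVec n)
    (N : Fin d → ℝ) (hN : N = (Real.sqrt (Fᵀ.mulVec n ⬝ᵥ Fᵀ.mulVec n))⁻¹ • Fᵀ.mulVec n) :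
    v ^ 2 = K * (n ⬝ᵥ (S * ρ⁻¹ * S).mulVec n) ∧
    v ^ 2 = n ⬝ᵥ V2.mulVec n ∧
    v ^ 2 = Fᵀ.mulVec n ⬝ᵥ Fᵀ.mulVec n ∧
    N ⬝ᵥ N = 1 ∧
    c = F.mulVec N := by
  subst hV2 hK hρ
  have hV2unit : IsUnit (F * Fᵀ) := by
    simpa [isUnit_iff_isUnit_det, det_mul] using hdet.ne'
  have hspeed : F.det * (n ⬝ᵥ (S * (F.det • (S * (F * Fᵀ)⁻¹ * S))⁻¹ * S) *ᵥ n) =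
      Fᵀ *ᵥ n ⬝ᵥ Fᵀ *ᵥ n := by
    rw [mul_smul_sandwich_inv_mul hdet.ne' hSinv hV2unit, smul_mulVec, dotProduct_smul,
      smul_eq_mul, mul_inv_cancel_left₀ hdet.ne', dotProduct_mul_transpose_mulVec]
  have hFn : Fᵀ *ᵥ n ≠ 0 := by
    have hFt : IsUnit Fᵀ := by simpa [isUnit_iff_isUnit_det] using hdet.ne'
    intro h
    rw [← mulVec_zero Fᵀ, (mulVec_injective_of_isUnit hFt).eq_iff] at h
    simp [h] at hn
  rw [hspeed] at hv
  have hv2 : v ^ 2 = Fᵀ *ᵥ n ⬝ᵥ Fᵀ *ᵥ n := by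
    rw [hv, Real.sq_sqrt (dotProduct_self_nonneg _)]
  refine ⟨hv2.trans hspeed.symm, hv2.trans (dotProduct_mul_transpose_mulVec F n).symm, hv2,
    hN ▸ dotProduct_inv_sqrt_smul_self hFn, ?_⟩
  rw [hc, hN, hv, mulVec_smul, mulVec_mulVec]

/-- For the PM-IC cloak with `V² = F Fᵀ`, `K = det F > 0`,
`ρ = K S V⁻² S` (`S` symmetric invertible), and a unit vector `n`, the phase speed
satisfies `v² = K n·(S ρ⁻¹ S n) = n·V² n = |Fᵀ n|²`, and the wave velocity
`c = v⁻¹ V² n` equals `F N` where `N = Fᵀ n / |Fᵀ n|` is a unit vector.  In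
particular `v` and `c` depend only on `F` and not on `S`. -/
theorem pmic_speeds_independent_of_S {d : ℕ} (F : Matrix (Fin d) (Fin d) ℝ)
    (hF : IsUnit F) (hdet : 0 < F.det)
    (V2 : Matrix (Fin d) (Fin d) ℝ) (hV2 : V2 = F * Fᵀ)
    (K : ℝ) (hK : K = F.det)
    (S : Matrix (Fin d) (Fin d) ℝ) (hS : S.IsSymm) (hSinv : IsUnit S)
    (ρ : Matrix (Fin d) (Fin d) ℝ) (hρ : ρ = K • (S * V2⁻¹ * S))
    (n : Fin d → ℝ) (hn : n ⬝ᵥ n = 1)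
    (v : ℝ) (hv : v = Real.sqrt (K * (n ⬝ᵥ (S * ρ⁻¹ * S).mulVec n)))
    (c : Fin d → ℝ) (hc : c = v⁻¹ • V2.mulVec n)
    (N : Fin d → ℝ) (hN : N = (Real.sqrt (Fᵀ.mulVec n ⬝ᵥ Fᵀ.mulVec n))⁻¹ • Fᵀ.mulVec n) :
    v ^ 2 = K * (n ⬝ᵥ (S * ρ⁻¹ * S).mulVec n) ∧
    v ^ 2 = n ⬝ᵥ V2.mulVec n ∧
    v ^ 2 = Fᵀ.mulVec n ⬝ᵥ Fᵀ.mulVec n ∧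
    N ⬝ᵥ N = 1 ∧
    c = F.mulVec N :=
  pmic_speeds_independent_of_S_general F hdet V2 hV2 K hK S hSinv ρ hρ n hn v hv c hc N hN
end

section
/- Let f : [a,b] → ℝ be C¹ with f' > 0, f > 0 (a 2D near-cloak). The normalized 2D radial mass m_r := (2/(b²−a²)) ∫_a^b r ρ_r dr with ρ_r = f'(r)·(r/f(r)) satisfies m_r = (2/(b²−a²)) [ b² ln f(b) − a² ln f(a) − 2∫_a^b r ln f(r) dr ]. Consequently, if f(b) = b is fixed and f(a) → 0⁺ (with f bounded), m_r → +∞. -/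
/-!
Since `r ρ_r = r² (log f)'`, integrating by parts against `r²` gives the identity. For the blow-up,
the bound `f ≤ Bnd` controls `∫ r log f` from above, and `f(b) = b` fixes the boundary term at `b`,
so the mass is at least a constant minus `a² log f(a)`, which tends to `+∞` as `f(a) → 0⁺`.
-/

open MeasureTheory intervalIntegral Real Set

theorem integral_sq_mul_logDeriv_eq {f f' : ℝ → ℝ} {a b : ℝ}
    (hf : ∀ r ∈ uIcc a b, HasDerivAt f (f' r) r) (hf' : ContinuousOn f' (uIcc a b))
    (hf0 : ∀ r ∈ uIcc a b, f r ≠ 0) :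
    ∫ r in a..b, r ^ 2 * (f' r / f r)
      = b ^ 2 * log (f b) - a ^ 2 * log (f a) - 2 * ∫ r in a..b, r * log (f r) := by
  have hfc : ContinuousOn f (uIcc a b) := fun r hr => (hf r hr).continuousAt.continuousWithinAt
  rw [integral_mul_deriv_eq_deriv_mul (u' := fun r => 2 * r)
    (fun r _ => by simpa using hasDerivAt_pow 2 r) (fun r hr => (hf r hr).log (hf0 r hr))
    ((continuous_const.mul continuous_id).intervalIntegrable a b)
    ((hf'.div hfc hf0).intervalIntegrable)]
  simp_rw [mul_assoc, intervalIntegral.integral_const_mul]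

theorem integral_mul_log_le {f : ℝ → ℝ} {a b B : ℝ} (ha : 0 ≤ a) (hab : a ≤ b)
    (hf : ContinuousOn f (Icc a b)) (hf0 : ∀ r ∈ Icc a b, 0 < f r)
    (hfB : ∀ r ∈ Icc a b, f r ≤ B) :
    ∫ r in a..b, r * log (f r) ≤ (b ^ 2 - a ^ 2) / 2 * log B := by
  have hint : IntervalIntegrable (fun r => r * log (f r)) volume a b := by
    apply ContinuousOn.intervalIntegrable
    rw [uIcc_of_le hab]
    exact continuousOn_id.mul (hf.log fun r hr => (hf0 r hr).ne')
  calc ∫ r in a..b, r * log (f r)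
      ≤ ∫ r in a..b, r * log B :=
        integral_mono_on hab hint ((continuous_id.mul continuous_const).intervalIntegrable a b)
          fun r hr => mul_le_mul_of_nonneg_left (log_le_log (hf0 r hr) (hfB r hr))
            (ha.trans hr.1)
    _ = (b ^ 2 - a ^ 2) / 2 * log B := by
        rw [intervalIntegral.integral_mul_const, integral_id]

/-- For a 2D near-cloak on `[a,b]` with `ρ_r = f'·(r/f)`, the
normalized radial mass `m_r = (2/(b²−a²)) ∫_a^b r ρ_r dr` satisfies
`m_r = (2/(b²−a²)) [ b² ln f(b) − a² ln f(a) − 2∫_a^b r ln f(r) dr ]`.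
Consequently, with `f(b) = b` fixed and `f` bounded, `m_r → +∞` as `f(a) → 0⁺`. -/
theorem radial_mass_2d (a b : ℝ) (ha : 0 < a) (hab : a < b) :
    (∀ f f' : ℝ → ℝ,
      (∀ r ∈ Set.Icc a b, HasDerivAt f (f' r) r) →
      ContinuousOn f' (Set.Icc a b) →
      (∀ r ∈ Set.Icc a b, 0 < f r) →
      (∀ r ∈ Set.Icc a b, 0 < f' r) →
      (2 / (b ^ 2 - a ^ 2)) * ∫ r in a..b, r * (f' r * (r / f r))
        = (2 / (b ^ 2 - a ^ 2)) *
          (b ^ 2 * Real.log (f b) - a ^ 2 * Real.log (f a)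
            - 2 * ∫ r in a..b, r * Real.log (f r)))
    ∧
    (∀ Bnd M : ℝ, ∃ δ > 0, ∀ f f' : ℝ → ℝ,
      (∀ r ∈ Set.Icc a b, HasDerivAt f (f' r) r) →
      ContinuousOn f' (Set.Icc a b) →
      (∀ r ∈ Set.Icc a b, 0 < f r) →
      (∀ r ∈ Set.Icc a b, 0 < f' r) →
      f b = b →
      (∀ r ∈ Set.Icc a b, f r ≤ Bnd) →
      f a < δ →
      (2 / (b ^ 2 - a ^ 2)) * (∫ r in a..b, r * (f' r * (r / f r))) > M) := by
  have mass_eq : ∀ f f' : ℝ → ℝ, (∀ r ∈ Icc a b, HasDerivAt f (f' r) r) →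
      ContinuousOn f' (Icc a b) → (∀ r ∈ Icc a b, 0 < f r) →
      ∫ r in a..b, r * (f' r * (r / f r))
        = b ^ 2 * log (f b) - a ^ 2 * log (f a) - 2 * ∫ r in a..b, r * log (f r) := by
    intro f f' hf hf' hf0
    rw [← uIcc_of_le hab.le] at hf hf' hf0
    rw [← integral_sq_mul_logDeriv_eq hf hf' fun r hr => (hf0 r hr).ne']
    exact integral_congr fun r _ => by ring
  refine ⟨fun f f' hf hf' hf0 _ => by rw [mass_eq f f' hf hf' hf0], fun Bnd M => ?_⟩
  have hba : 0 < b ^ 2 - a ^ 2 := by nlinarith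
  -- the threshold below which `-a² log f(a)` outweighs all the other terms
  set T := M * (b ^ 2 - a ^ 2) / 2 - b ^ 2 * log b + (b ^ 2 - a ^ 2) * log Bnd with hT
  refine ⟨exp (-T / a ^ 2), exp_pos _, fun f f' hf hf' hf0 _ hfb hfB hfa => ?_⟩
  have haI : a ∈ Icc a b := ⟨le_rfl, hab.le⟩
  have hlog_fa : a ^ 2 * log (f a) < -T := by
    have := log_lt_log (hf0 a haI) hfa
    rw [log_exp, lt_div_iff₀ (by positivity)] at this
    linarith
  have hI := integral_mul_log_le ha.le hab.le
    (fun r hr => (hf r hr).continuousAt.continuousWithinAt) hf0 hfB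
  rw [mass_eq f f' hf hf' hf0, hfb, gt_iff_lt, div_mul_eq_mul_div, lt_div_iff₀ hba]
  linarith [hT]
end

section
/- Let Ĉ be a real symmetric 6×6 matrix (Voigt-normalized elasticity matrix) of rank one with nonnegative spectrum. Then there exist K > 0 and a symmetric 3×3 matrix S̃ with tr(S̃²) = 3 such that the fourth-order tensor C_{ijkl} corresponding to Ĉ satisfies C_{ijkl} = K S̃_{ij} S̃_{kl}, and K = (1/3) C_{ijij} = (1/3)(C₁₁+C₂₂+C₃₃+2C₄₄+2C₅₅+2C₆₆). -/
open Matrix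

/-!
A real positive semidefinite matrix of rank one is `v vᵀ`: its columns are multiples of one
vector `u`, symmetry forces the multipliers to be `t u` for a scalar `t`, and a diagonal entry
`t u_a²` with `u_a ≠ 0` shows `t ≥ 0`. Undoing the √2 normalisation turns `v` into a symmetric
matrix `S` with `C_{ijkl} = S_{ij} S_{kl}`, the minor symmetries supplying the entries that
Voigt notation does not list. Rescaling `S` so that `tr(S²) = 3` gives `K = tr(S²)/3 = C_{ijij}/3`.
-/

/-- Voigt index map: 1↦11, 2↦22, 3↦33, 4↦23, 5↦31, 6↦12. -/
def voigtIdx : Fin 6 → Fin 3 × Fin 3 := ![(0,0), (1,1), (2,2), (1,2), (2,0), (0,1)]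

/-- Voigt (Kelvin/Mandel) normalization coefficient: 1 for normal components,
`√2` for shear components. -/
noncomputable def voigtCoef : Fin 6 → ℝ := fun a =>
  if (voigtIdx a).1 = (voigtIdx a).2 then 1 else Real.sqrt 2

namespace Matrix

variable {m n K : Type*} [Fintype n]

theorem exists_eq_vecMulVec_of_rank_le_one [Field K] {A : Matrix m n K}
    (hA : A.rank ≤ 1) : ∃ u : m → K, ∃ w : n → K, A = vecMulVec u w := by
  classical
  obtain ⟨u, hu⟩ := finrank_le_one_iff.mp hA
  choose w hw using fun b ↦ hu ⟨A *ᵥ Pi.single b 1, Pi.single b 1, rfl⟩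
  refine ⟨u, w, ext fun a b ↦ ?_⟩
  simpa [mulVec_single, vecMulVec_apply, mul_comm] using
    (congrFun (congrArg Subtype.val (hw b)) a).symm

theorem PosSemidef.exists_eq_vecMulVec_self_of_eq_vecMulVec {A : Matrix n n ℝ}
    (hA : A.PosSemidef) {u w : n → ℝ} (huw : A = vecMulVec u w) :
    ∃ v : n → ℝ, A = vecMulVec v v := by
  by_cases hu : u = 0
  · exact ⟨0, by simp [huw, hu]⟩
  obtain ⟨a₀, ha₀⟩ := Function.ne_iff.mp hu
  obtain ⟨t, rfl⟩ : ∃ t : ℝ, w = t • u := ⟨w a₀ / u a₀, funext fun b ↦ by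
    have hsymm := hA.isHermitian.apply a₀ b
    simp only [huw, vecMulVec_apply, star_trivial] at hsymm
    rw [Pi.smul_apply, smul_eq_mul, div_mul_eq_mul_div, eq_div_iff ha₀]
    linarith⟩
  have ht : 0 ≤ t := by
    have hdiag := hA.diag_nonneg (i := a₀)
    simp only [huw, vecMulVec_apply, Pi.smul_apply, smul_eq_mul] at hdiag
    exact nonneg_of_mul_nonneg_left (by linarith) (mul_self_pos.mpr ha₀)
  refine ⟨√t • u, ext fun a b ↦ ?_⟩
  simp only [huw, vecMulVec_apply, Pi.smul_apply, smul_eq_mul]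
  linear_combination -(u a * u b) * Real.mul_self_sqrt ht

theorem IsSymm.trace_mul_self_pos {S : Matrix n n ℝ} (hS : S.IsSymm) (h : S ≠ 0) :
    0 < trace (S * S) := by
  have hSS : S * S = Sᴴ * S := by rw [conjTranspose_eq_transpose_of_trivial, hS.eq]
  rw [hSS]
  exact (posSemidef_conjTranspose_mul_self S).trace_nonneg.lt_of_ne'
    (trace_conjTranspose_mul_self_eq_zero_iff.not.mpr h)

theorem IsSymm.exists_trace_mul_self_eq {S : Matrix n n ℝ} (hS : S.IsSymm)
    (hpos : 0 < trace (S * S)) {c : ℝ} (hc : 0 < c) :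
    ∃ T : Matrix n n ℝ, T.IsSymm ∧ trace (T * T) = c ∧
      ∀ i j k l, S i j * S k l = trace (S * S) / c * T i j * T k l := by
  have hsq : √(c / trace (S * S)) * √(c / trace (S * S)) = c / trace (S * S) :=
    Real.mul_self_sqrt (by positivity)
  refine ⟨√(c / trace (S * S)) • S, hS.smul _, ?_, fun i j k l ↦ ?_⟩
  · rw [smul_mul_smul, trace_smul, hsq, smul_eq_mul]
    field_simp
  · have hinv : trace (S * S) / c * (c / trace (S * S)) = 1 := by field_simp
    simp only [smul_apply, smul_eq_mul]
    linear_combination (-(trace (S * S) / c * (S i j * S k l))) * hsq - S i j * S k l * hinv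

end Matrix

def voigtPos : Fin 3 → Fin 3 → Fin 6 := ![![0, 5, 4], ![5, 1, 3], ![4, 3, 2]]

theorem voigtPos_comm (i j : Fin 3) : voigtPos i j = voigtPos j i := by
  revert i j; decide

theorem voigtPos_voigtIdx (a : Fin 6) : voigtPos (voigtIdx a).1 (voigtIdx a).2 = a := by
  revert a; decide

theorem apply_voigtIdx_voigtPos {α : Type*} {f : Fin 3 → Fin 3 → α}
    (hf : ∀ i j, f i j = f j i) (i j : Fin 3) :
    f (voigtIdx (voigtPos i j)).1 (voigtIdx (voigtPos i j)).2 = f i j := by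
  have : voigtIdx (voigtPos i j) = (i, j) ∨ voigtIdx (voigtPos i j) = (j, i) := by
    revert i j; decide
  rcases this with h | h <;> rw [h]
  exact hf j i

theorem voigtCoef_pos (a : Fin 6) : 0 < voigtCoef a := by
  unfold voigtCoef; split_ifs <;> positivity

noncomputable def voigtMatrix (C : Fin 3 → Fin 3 → Fin 3 → Fin 3 → ℝ) :
    Matrix (Fin 6) (Fin 6) ℝ :=
  of fun a b ↦ voigtCoef a * voigtCoef b *
    C (voigtIdx a).1 (voigtIdx a).2 (voigtIdx b).1 (voigtIdx b).2

noncomputable def fromVoigt (v : Fin 6 → ℝ) : Matrix (Fin 3) (Fin 3) ℝ :=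
  of fun i j ↦ v (voigtPos i j) / voigtCoef (voigtPos i j)

theorem fromVoigt_isSymm (v : Fin 6 → ℝ) : (fromVoigt v).IsSymm :=
  ext fun i j ↦ by simp [fromVoigt, voigtPos_comm i j]

theorem fromVoigt_ne_zero {v : Fin 6 → ℝ} (hv : v ≠ 0) : fromVoigt v ≠ 0 := by
  obtain ⟨a, ha⟩ := Function.ne_iff.mp hv
  intro h
  have hentry := congrFun₂ h (voigtIdx a).1 (voigtIdx a).2
  exact ha (by simpa [fromVoigt, voigtPos_voigtIdx, (voigtCoef_pos a).ne'] using hentry)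

theorem apply_eq_fromVoigt_mul_fromVoigt {C : Fin 3 → Fin 3 → Fin 3 → Fin 3 → ℝ}
    (hsym1 : ∀ i j k l, C i j k l = C j i k l) (hsym2 : ∀ i j k l, C i j k l = C i j l k)
    {v : Fin 6 → ℝ} (hv : voigtMatrix C = vecMulVec v v) (i j k l : Fin 3) :
    C i j k l = fromVoigt v i j * fromVoigt v k l := by
  set p := voigtPos i j
  set q := voigtPos k l
  have hpq : C (voigtIdx p).1 (voigtIdx p).2 (voigtIdx q).1 (voigtIdx q).2 = C i j k l := by
    rw [apply_voigtIdx_voigtPos (f := fun k l ↦ C _ _ k l) (hsym2 _ _),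
      apply_voigtIdx_voigtPos (f := fun i j ↦ C i j k l) (hsym1 · · k l)]
  have hentry := congrFun₂ hv p q
  simp only [voigtMatrix, of_apply, vecMulVec_apply, hpq] at hentry
  rw [fromVoigt, of_apply, of_apply, div_mul_div_comm, eq_div_iff
    (mul_pos (voigtCoef_pos p) (voigtCoef_pos q)).ne', ← hentry]
  ring

theorem pentamode_decomposition_general
    (C : Fin 3 → Fin 3 → Fin 3 → Fin 3 → ℝ)
    (hsym1 : ∀ i j k l, C i j k l = C j i k l)
    (hsym2 : ∀ i j k l, C i j k l = C i j l k)
    (Chat : Matrix (Fin 6) (Fin 6) ℝ)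
    (hChat : ∀ a b : Fin 6, Chat a b = voigtCoef a * voigtCoef b *
      C (voigtIdx a).1 (voigtIdx a).2 (voigtIdx b).1 (voigtIdx b).2)
    (hrank : Chat.rank = 1) (hpsd : Chat.PosSemidef) :
    ∃ K : ℝ, 0 < K ∧ ∃ St : Matrix (Fin 3) (Fin 3) ℝ, St.IsSymm ∧
      Matrix.trace (St * St) = 3 ∧
      (∀ i j k l, C i j k l = K * St i j * St k l) ∧
      K = (1 / 3) * ∑ i : Fin 3, ∑ j : Fin 3, C i j i j := by
  obtain ⟨u, w, huw⟩ := exists_eq_vecMulVec_of_rank_le_one hrank.le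
  obtain ⟨v, hv⟩ := hpsd.exists_eq_vecMulVec_self_of_eq_vecMulVec huw
  have hv0 : v ≠ 0 := by
    rintro rfl
    simp [hv] at hrank
  have hChat' : Chat = voigtMatrix C := ext hChat
  set S := fromVoigt v
  have hS : S.IsSymm := fromVoigt_isSymm v
  have hC : ∀ i j k l, C i j k l = S i j * S k l :=
    apply_eq_fromVoigt_mul_fromVoigt hsym1 hsym2 (hChat' ▸ hv)
  have htrace : ∑ i, ∑ j, C i j i j = trace (S * S) := by
    simp only [hC, trace, diag, mul_apply, hS.apply]
  have hpos := hS.trace_mul_self_pos (fromVoigt_ne_zero hv0)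
  obtain ⟨St, hSt, hStSt, hSSt⟩ := hS.exists_trace_mul_self_eq hpos three_pos
  exact ⟨trace (S * S) / 3, by positivity, St, hSt, hStSt,
    fun i j k l ↦ (hC i j k l).trans (hSSt i j k l), by rw [htrace]; ring⟩

/-- if the Voigt-normalized 6×6 elasticity matrix `Chat` of a
fourth-order tensor `C` with the usual symmetries is rank one with nonnegative
spectrum (positive semidefinite), then there exist `K > 0` and a symmetric 3×3
matrix `S̃` with `tr(S̃²) = 3` such that `C_{ijkl} = K S̃_{ij} S̃_{kl}`, and
`K = (1/3) C_{ijij}`. -/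
theorem pentamode_decomposition
    (C : Fin 3 → Fin 3 → Fin 3 → Fin 3 → ℝ)
    (hsym1 : ∀ i j k l, C i j k l = C j i k l)
    (hsym2 : ∀ i j k l, C i j k l = C i j l k)
    (hsym3 : ∀ i j k l, C i j k l = C k l i j)
    (Chat : Matrix (Fin 6) (Fin 6) ℝ)
    (hChat : ∀ a b : Fin 6, Chat a b = voigtCoef a * voigtCoef b *
      C (voigtIdx a).1 (voigtIdx a).2 (voigtIdx b).1 (voigtIdx b).2)
    (hrank : Chat.rank = 1) (hpsd : Chat.PosSemidef) :
    ∃ K : ℝ, 0 < K ∧ ∃ St : Matrix (Fin 3) (Fin 3) ℝ, St.IsSymm ∧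
      Matrix.trace (St * St) = 3 ∧
      (∀ i j k l, C i j k l = K * St i j * St k l) ∧
      K = (1 / 3) * ∑ i : Fin 3, ∑ j : Fin 3, C i j i j :=
  pentamode_decomposition_general C hsym1 hsym2 Chat hChat hrank hpsd
end

section
/- Consider an orthotropic pentamode elasticity tensor C = K S⊗S with S = diag(s₁, s₂, s₃) diagonal positive, and inertia ρ = diag(ρ₁, ρ₂, ρ₃) positive. Set C_{ii} = K s_i² and c_i² = C_{ii}/ρ_i. Then for any unit vector n = (n₁,n₂,n₃), the unique nonzero phase speed satisfies v² = c₁² n₁² + c₂² n₂² + c₃² n₃², and the group velocity is c = v⁻¹(c₁² n₁, c₂² n₂, c₃² n₃). In particular the slowness surface { s : s·diag(c₁²,c₂²,c₃²) s = 1 } is an ellipsoid. -/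
open Matrix

section Diagonal

variable {ι 𝕜 : Type*} [Fintype ι] [DecidableEq ι] [Field 𝕜]

theorem Matrix.inv_diagonal_of_ne_zero {d : ι → 𝕜} (hd : ∀ i, d i ≠ 0) :
    (diagonal d)⁻¹ = diagonal d⁻¹ :=
  inv_eq_right_inv <| by
    rw [diagonal_mul_diagonal, ← diagonal_one]
    exact congrArg diagonal (funext fun i => mul_inv_cancel₀ (hd i))

theorem Matrix.diagonal_mul_inv_diagonal_mul_diagonal (s : ι → 𝕜) {d : ι → 𝕜}
    (hd : ∀ i, d i ≠ 0) :
    diagonal s * (diagonal d)⁻¹ * diagonal s = diagonal fun i => s i ^ 2 / d i := by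
  rw [inv_diagonal_of_ne_zero hd, diagonal_mul_diagonal, diagonal_mul_diagonal]
  congr 1
  funext i
  simp only [Pi.inv_apply]
  ring

theorem Matrix.dotProduct_diagonal_mulVec_self {R : Type*} [CommSemiring R] (d n : ι → R) :
    n ⬝ᵥ diagonal d *ᵥ n = ∑ i, d i * n i ^ 2 := by
  simp only [dotProduct, mulVec_diagonal]
  exact Finset.sum_congr rfl fun i _ => by ring

end Diagonal

theorem orthotropic_pentamode_speeds_general (K : ℝ) (hK : 0 < K)
    (s ρv : Fin 3 → ℝ) (hρv : ∀ i, 0 < ρv i)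
    (S ρ : Matrix (Fin 3) (Fin 3) ℝ) (hS : S = diagonal s) (hρ : ρ = diagonal ρv)
    (n : Fin 3 → ℝ)
    (c2 : Fin 3 → ℝ) (hc2 : ∀ i, c2 i = K * (s i) ^ 2 / ρv i)
    (v : ℝ) (hv : v = Real.sqrt (K * (n ⬝ᵥ (S * ρ⁻¹ * S).mulVec n)))
    (c : Fin 3 → ℝ) (hc : c = v⁻¹ • (K • (S * ρ⁻¹ * S).mulVec n)) :
    v ^ 2 = ∑ i, c2 i * (n i) ^ 2 ∧ (∀ i, c i = v⁻¹ * (c2 i * n i)) := by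
  have hM : S * ρ⁻¹ * S = diagonal fun i => s i ^ 2 / ρv i := by
    rw [hS, hρ]
    exact diagonal_mul_inv_diagonal_mul_diagonal s fun i => (hρv i).ne'
  have hq : K * (n ⬝ᵥ (S * ρ⁻¹ * S) *ᵥ n) = ∑ i, c2 i * n i ^ 2 := by
    rw [hM, dotProduct_diagonal_mulVec_self, Finset.mul_sum]
    exact Finset.sum_congr rfl fun i _ => by rw [hc2]; ring
  have hc2_nonneg (i : Fin 3) : 0 ≤ c2 i := by
    have := hρv i
    rw [hc2]
    positivity
  have hq_nonneg : 0 ≤ ∑ i, c2 i * n i ^ 2 :=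
    Finset.sum_nonneg fun i _ => mul_nonneg (hc2_nonneg i) (sq_nonneg _)
  refine ⟨?_, fun i => ?_⟩
  · rw [hv, Real.sq_sqrt (hq ▸ hq_nonneg), hq]
  · rw [hc, Pi.smul_apply, Pi.smul_apply, hM, mulVec_diagonal, hc2]
    simp only [smul_eq_mul]
    ring

/-- For an orthotropic pentamode with `C = K S⊗S`,
`S = diag(s₁,s₂,s₃)` positive, inertia `ρ = diag(ρ₁,ρ₂,ρ₃)` positive, and
`c_i² = K s_i²/ρ_i`, the unique nonzero phase speed for a unit vector `n` satisfies
`v² = c₁²n₁² + c₂²n₂² + c₃²n₃²` and the group velocity is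
`c = v⁻¹ (c₁²n₁, c₂²n₂, c₃²n₃)`. -/
theorem orthotropic_pentamode_speeds (K : ℝ) (hK : 0 < K)
    (s ρv : Fin 3 → ℝ) (hs : ∀ i, 0 < s i) (hρv : ∀ i, 0 < ρv i)
    (S ρ : Matrix (Fin 3) (Fin 3) ℝ) (hS : S = diagonal s) (hρ : ρ = diagonal ρv)
    (n : Fin 3 → ℝ) (hn : n ⬝ᵥ n = 1)
    (c2 : Fin 3 → ℝ) (hc2 : ∀ i, c2 i = K * (s i) ^ 2 / ρv i)
    (v : ℝ) (hv : v = Real.sqrt (K * (n ⬝ᵥ (S * ρ⁻¹ * S).mulVec n)))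
    (c : Fin 3 → ℝ) (hc : c = v⁻¹ • (K • (S * ρ⁻¹ * S).mulVec n)) :
    v ^ 2 = ∑ i, c2 i * (n i) ^ 2 ∧ (∀ i, c i = v⁻¹ * (c2 i * n i)) :=
  orthotropic_pentamode_speeds_general K hK s ρv hρv S ρ hS hρ n c2 hc2 v hv c hc
end

section
/- Let χ : Ω → ω be a C² diffeomorphism with deformation gradient F and V² = F Fᵀ. Fix a unit vector N and X₀ ∈ Ω, and let x(τ) = χ(X₀ + τ N) be the image of the straight line. Define s(τ) = F⁻ᵀ N evaluated along the curve. Then x and s satisfy the ray (geodesic) ODE system: dx/dτ = V² s and ds_k/dτ = −(1/2) s_i (∂(V²)_{ij}/∂x_k) s_j; moreover the quantity s·V² s is constant along the curve and equals 1. -/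
/-!
Along the image of the line, `s = F⁻ᵀ N = (Dψ)ᵀ N` is the gradient of the scalar field
`φ = N ⬝ᵥ ψ`, taken at `x(τ)`. On all of `ω` this gradient satisfies the eikonal equation
`∇φ · V² ∇φ = |N|² = 1`, and `V² ∇φ = F N = dx/dτ`. Therefore `ds/dτ = D²φ (V² ∇φ)`.
Differentiating the eikonal equation in `x_k` and using the symmetry of the Hessian `D²φ`
turns this into `-(1/2) s · ∂_k V² s`.
-/

open Matrix Filter Topology

section MatrixAlgebra

variable {n R : Type*} [Fintype n] [DecidableEq n] [CommRing R] {A : Matrix n n R}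

theorem mul_transpose_mulVec_inv_transpose_mulVec (hA : IsUnit A.det) (v : n → R) :
    (A * Aᵀ) *ᵥ (A⁻¹ᵀ *ᵥ v) = A *ᵥ v := by
  rw [mulVec_mulVec, Matrix.mul_assoc, ← transpose_mul, nonsing_inv_mul _ hA, transpose_one,
    Matrix.mul_one]

theorem inv_transpose_mulVec_dotProduct_mul_transpose_mulVec (hA : IsUnit A.det) (v : n → R) :
    A⁻¹ᵀ *ᵥ v ⬝ᵥ (A * Aᵀ) *ᵥ (A⁻¹ᵀ *ᵥ v) = v ⬝ᵥ v := by
  rw [mul_transpose_mulVec_inv_transpose_mulVec hA, mulVec_transpose, dotProduct_mulVec,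
    vecMul_vecMul, nonsing_inv_mul _ hA, vecMul_one]

end MatrixAlgebra

section Derivatives

variable {𝕜 ι κ E : Type*} [NontriviallyNormedField 𝕜] [Fintype ι] [NormedAddCommGroup E]
  [NormedSpace 𝕜 E] {y : E}

theorem HasFDerivAt.dotProduct {u w : E → ι → 𝕜} {u' w' : E →L[𝕜] ι → 𝕜}
    (hu : HasFDerivAt u u' y) (hw : HasFDerivAt w w' y) :
    HasFDerivAt (fun z => u z ⬝ᵥ w z)
      (∑ i, (u y i • (ContinuousLinearMap.proj i).comp w' +
        w y i • (ContinuousLinearMap.proj i).comp u')) y :=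
  HasFDerivAt.fun_sum fun i _ => (hasFDerivAt_pi'.1 hu i).mul (hasFDerivAt_pi'.1 hw i)

theorem DifferentiableAt.dotProduct {u w : E → ι → 𝕜}
    (hu : DifferentiableAt 𝕜 u y) (hw : DifferentiableAt 𝕜 w y) :
    DifferentiableAt 𝕜 (fun z => u z ⬝ᵥ w z) y :=
  (hu.hasFDerivAt.dotProduct hw.hasFDerivAt).differentiableAt

theorem fderiv_dotProduct_apply {u w : E → ι → 𝕜}
    (hu : DifferentiableAt 𝕜 u y) (hw : DifferentiableAt 𝕜 w y) (v : E) :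
    fderiv 𝕜 (fun z => u z ⬝ᵥ w z) y v = fderiv 𝕜 u y v ⬝ᵥ w y + u y ⬝ᵥ fderiv 𝕜 w y v := by
  rw [(hu.hasFDerivAt.dotProduct hw.hasFDerivAt).fderiv]
  simp [dotProduct, Finset.sum_add_distrib, mul_comm, add_comm]

theorem DifferentiableAt.mulVec {W : E → Matrix κ ι 𝕜} {u : E → ι → 𝕜}
    (hW : ∀ i j, DifferentiableAt 𝕜 (fun z => W z i j) y) (hu : DifferentiableAt 𝕜 u y) :
    DifferentiableAt 𝕜 (fun z => W z *ᵥ u z) y :=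
  differentiableAt_pi.2 fun i => (differentiableAt_pi.2 (hW i)).dotProduct hu

theorem fderiv_mulVec_apply {W : E → Matrix κ ι 𝕜} {u : E → ι → 𝕜}
    (hW : ∀ i j, DifferentiableAt 𝕜 (fun z => W z i j) y) (hu : DifferentiableAt 𝕜 u y) (v : E) :
    fderiv 𝕜 (fun z => W z *ᵥ u z) y v =
      (of fun i j => fderiv 𝕜 (fun z => W z i j) y v) *ᵥ u y + W y *ᵥ fderiv 𝕜 u y v := by
  ext i
  have hWi : DifferentiableAt 𝕜 (fun z => W z i) y := differentiableAt_pi.2 (hW i)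
  rw [← ContinuousLinearMap.proj_apply (R := 𝕜) i (fderiv 𝕜 _ y v),
    ← ContinuousLinearMap.comp_apply, ← fderiv_apply (F' := fun _ : κ => 𝕜) (hu.mulVec hW)]
  simp only [mulVec, fderiv_dotProduct_apply hWi hu, Pi.add_apply, fderiv_pi (hW i)]
  rfl

theorem differentiableAt_mul_apply {W V : E → Matrix ι ι 𝕜}
    (hW : ∀ i j, DifferentiableAt 𝕜 (fun z => W z i j) y)
    (hV : ∀ i j, DifferentiableAt 𝕜 (fun z => V z i j) y) (i j : ι) :
    DifferentiableAt 𝕜 (fun z => (W z * V z) i j) y := by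
  simp only [mul_apply']
  exact (differentiableAt_pi.2 (hW i)).dotProduct (differentiableAt_pi.2 fun l => hV l j)

theorem ContDiffAt.const_dotProduct {u : E → ι → 𝕜} {m : WithTop ℕ∞} (N : ι → 𝕜)
    (hu : ContDiffAt 𝕜 m u y) : ContDiffAt 𝕜 m (fun z => N ⬝ᵥ u z) y := by
  unfold dotProduct
  fun_prop

theorem ContDiffAt.differentiableAt_fderiv {F : Type*} [NormedAddCommGroup F] [NormedSpace 𝕜 F]
    {f : E → F} (hf : ContDiffAt 𝕜 2 f y) : DifferentiableAt 𝕜 (fderiv 𝕜 f) y :=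
  (hf.fderiv_right (m := 1) (by norm_num)).differentiableAt one_ne_zero

end Derivatives

noncomputable section Eikonal

variable {ι : Type*} [Fintype ι] [DecidableEq ι]

theorem fderiv_apply_mulVec_of_eventually_dotProduct_mulVec_eq
    {S : (ι → ℝ) → ι → ℝ} {W : (ι → ℝ) → Matrix ι ι ℝ} {y : ι → ℝ} {c : ℝ}
    (hS : DifferentiableAt ℝ S y)
    (hS_symm : ∀ i j, fderiv ℝ S y (Pi.single i 1) j = fderiv ℝ S y (Pi.single j 1) i)
    (hW : ∀ i j, DifferentiableAt ℝ (fun z => W z i j) y) (hW_symm : (W y)ᵀ = W y)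
    (hc : ∀ᶠ z in 𝓝 y, S z ⬝ᵥ W z *ᵥ S z = c) (k : ι) :
    fderiv ℝ S y (W y *ᵥ S y) k =
      -(1 / 2) * ∑ i, ∑ j, S y i * fderiv ℝ (fun z => W z i j) y (Pi.single k 1) * S y j := by
  set DS := fderiv ℝ S y
  set e : ι → ℝ := Pi.single k 1
  have hq : fderiv ℝ (fun z => S z ⬝ᵥ W z *ᵥ S z) y e = 0 := by
    rw [EventuallyEq.fderiv_eq (f := fun _ => c) hc, fderiv_const_apply, _root_.zero_apply]
  rw [fderiv_dotProduct_apply hS (hS.mulVec hW), fderiv_mulVec_apply hW hS, dotProduct_add] at hq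
  have hDS : DS (W y *ᵥ S y) k = DS e ⬝ᵥ W y *ᵥ S y := by
    change (DS : (ι → ℝ) →ₗ[ℝ] ι → ℝ) (W y *ᵥ S y) k = _
    rw [← LinearMap.toMatrix'_mulVec, mulVec, dotProduct, dotProduct]
    exact Finset.sum_congr rfl fun i _ => by
      rw [LinearMap.toMatrix'_apply, ContinuousLinearMap.coe_coe, hS_symm, mul_comm]
  have hW_self : S y ⬝ᵥ W y *ᵥ DS e = DS e ⬝ᵥ W y *ᵥ S y := by
    rw [dotProduct_mulVec, ← mulVec_transpose, hW_symm, dotProduct_comm]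
  have hquad : S y ⬝ᵥ (of fun i j => fderiv ℝ (fun z => W z i j) y e) *ᵥ S y =
      ∑ i, ∑ j, S y i * fderiv ℝ (fun z => W z i j) y e * S y j := by
    simp only [dotProduct, mulVec, of_apply, Finset.mul_sum, mul_assoc]
  linarith

def coordGradient (φ : (ι → ℝ) → ℝ) (y : ι → ℝ) : ι → ℝ :=
  fun k => fderiv ℝ φ y (Pi.single k 1)

theorem hasFDerivAt_coordGradient {φ : (ι → ℝ) → ℝ} {y : ι → ℝ}
    (h : DifferentiableAt ℝ (fderiv ℝ φ) y) :
    HasFDerivAt (coordGradient φ)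
      (ContinuousLinearMap.pi fun k =>
        (ContinuousLinearMap.apply ℝ ℝ (Pi.single k 1)).comp (fderiv ℝ (fderiv ℝ φ) y)) y :=
  hasFDerivAt_pi.2 fun k =>
    ((ContinuousLinearMap.apply ℝ ℝ (Pi.single k 1)).hasFDerivAt.comp y h.hasFDerivAt :)

theorem fderiv_coordGradient_symm {φ : (ι → ℝ) → ℝ} {y : ι → ℝ} (h : ContDiffAt ℝ 2 φ y)
    (i j : ι) :
    fderiv ℝ (coordGradient φ) y (Pi.single i 1) j =
      fderiv ℝ (coordGradient φ) y (Pi.single j 1) i := by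
  rw [(hasFDerivAt_coordGradient h.differentiableAt_fderiv).fderiv]
  exact h.isSymmSndFDerivAt (by simp) _ _

theorem HasDerivAt.coordGradient_comp_of_eventually_dotProduct_mulVec_eq
    {φ : (ι → ℝ) → ℝ} {W : (ι → ℝ) → Matrix ι ι ℝ} {x : ℝ → ι → ℝ} {τ₀ c : ℝ}
    (hφ : ContDiffAt ℝ 2 φ (x τ₀)) (hW : ∀ i j, DifferentiableAt ℝ (fun z => W z i j) (x τ₀))
    (hW_symm : (W (x τ₀))ᵀ = W (x τ₀))
    (hc : ∀ᶠ z in 𝓝 (x τ₀), coordGradient φ z ⬝ᵥ W z *ᵥ coordGradient φ z = c)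
    (hx : HasDerivAt x (W (x τ₀) *ᵥ coordGradient φ (x τ₀)) τ₀) :
    HasDerivAt (coordGradient φ ∘ x) (fun k => -(1 / 2) * ∑ i, ∑ j, coordGradient φ (x τ₀) i *
      fderiv ℝ (fun z => W z i j) (x τ₀) (Pi.single k 1) * coordGradient φ (x τ₀) j) τ₀ := by
  have hS := hasFDerivAt_coordGradient hφ.differentiableAt_fderiv
  refine (hS.comp_hasDerivAt τ₀ hx).congr_deriv (funext fun k => ?_)
  rw [← hS.fderiv]
  exact fderiv_apply_mulVec_of_eventually_dotProduct_mulVec_eq hS.differentiableAt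
    (fderiv_coordGradient_symm hφ) hW hW_symm hc k

end Eikonal

noncomputable section Deformation

variable {ι : Type*} [Fintype ι] [DecidableEq ι]

def jacobianMatrix (f : (ι → ℝ) → ι → ℝ) (y : ι → ℝ) : Matrix ι ι ℝ :=
  LinearMap.toMatrix' (fderiv ℝ f y : (ι → ℝ) →ₗ[ℝ] ι → ℝ)

/-- `V² = F Fᵀ` as a field on the deformed configuration, `g` being the inverse of `f`. -/
def leftCauchyGreen (f g : (ι → ℝ) → ι → ℝ) (y : ι → ℝ) : Matrix ι ι ℝ :=
  jacobianMatrix f (g y) * (jacobianMatrix f (g y))ᵀ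

theorem jacobianMatrix_mulVec (f : (ι → ℝ) → ι → ℝ) (y v : ι → ℝ) :
    jacobianMatrix f y *ᵥ v = fderiv ℝ f y v :=
  LinearMap.toMatrix'_mulVec _ v

theorem coordGradient_dotProduct (N : ι → ℝ) {ψ : (ι → ℝ) → ι → ℝ} {y : ι → ℝ}
    (hψ : DifferentiableAt ℝ ψ y) :
    coordGradient (fun z => N ⬝ᵥ ψ z) y = (jacobianMatrix ψ y)ᵀ *ᵥ N := by
  ext k
  simp only [coordGradient, fderiv_dotProduct_apply (differentiableAt_const N) hψ,
    fderiv_const_apply, _root_.zero_apply, zero_dotProduct, zero_add, mulVec_transpose]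
  rfl

theorem differentiableAt_jacobianMatrix_comp_apply {f g : (ι → ℝ) → ι → ℝ} {y : ι → ℝ}
    (hf : ContDiffAt ℝ 2 f (g y)) (hg : DifferentiableAt ℝ g y) (i j : ι) :
    DifferentiableAt ℝ (fun z => jacobianMatrix f (g z) i j) y :=
  ((differentiableAt_apply i _).comp y <|
    (hf.differentiableAt_fderiv.comp y hg).clm_apply (differentiableAt_const _) :)

theorem differentiableAt_leftCauchyGreen_apply {f g : (ι → ℝ) → ι → ℝ} {y : ι → ℝ}
    (hf : ContDiffAt ℝ 2 f (g y)) (hg : DifferentiableAt ℝ g y) (i j : ι) :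
    DifferentiableAt ℝ (fun z => leftCauchyGreen f g z i j) y :=
  differentiableAt_mul_apply (differentiableAt_jacobianMatrix_comp_apply hf hg)
    (fun i j => differentiableAt_jacobianMatrix_comp_apply hf hg j i) i j

theorem leftCauchyGreen_transpose (f g : (ι → ℝ) → ι → ℝ) (y : ι → ℝ) :
    (leftCauchyGreen f g y)ᵀ = leftCauchyGreen f g y := by
  rw [leftCauchyGreen, transpose_mul, transpose_transpose]

section RightInverse

variable {f g : (ι → ℝ) → ι → ℝ} {y : ι → ℝ} (hf : DifferentiableAt ℝ f (g y))
  (hg : DifferentiableAt ℝ g y) (hfg : ∀ᶠ z in 𝓝 y, f (g z) = z)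
include hf hg hfg

theorem jacobianMatrix_mul_jacobianMatrix_eq_one :
    jacobianMatrix f (g y) * jacobianMatrix g y = 1 := by
  have hcomp : (fderiv ℝ f (g y)).comp (fderiv ℝ g y) = ContinuousLinearMap.id ℝ (ι → ℝ) :=
    (hf.hasFDerivAt.comp y hg.hasFDerivAt).unique ((hasFDerivAt_id y).congr_of_eventuallyEq hfg)
  rw [jacobianMatrix, jacobianMatrix, ← LinearMap.toMatrix'_comp,
    ← ContinuousLinearMap.toLinearMap_comp, hcomp]
  exact LinearMap.toMatrix'_id

theorem coordGradient_dotProduct_eq_inv_transpose_mulVec (N : ι → ℝ) :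
    coordGradient (fun z => N ⬝ᵥ g z) y = (jacobianMatrix f (g y))⁻¹ᵀ *ᵥ N := by
  rw [coordGradient_dotProduct N hg,
    inv_eq_right_inv (jacobianMatrix_mul_jacobianMatrix_eq_one hf hg hfg)]

theorem leftCauchyGreen_mulVec_coordGradient_dotProduct (N : ι → ℝ) :
    leftCauchyGreen f g y *ᵥ coordGradient (fun z => N ⬝ᵥ g z) y = fderiv ℝ f (g y) N := by
  rw [coordGradient_dotProduct_eq_inv_transpose_mulVec hf hg hfg, leftCauchyGreen,
    mul_transpose_mulVec_inv_transpose_mulVec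
      (isUnit_det_of_right_inverse (jacobianMatrix_mul_jacobianMatrix_eq_one hf hg hfg)),
    jacobianMatrix_mulVec]

theorem coordGradient_dotProduct_mulVec_leftCauchyGreen (N : ι → ℝ) :
    coordGradient (fun z => N ⬝ᵥ g z) y ⬝ᵥ
      leftCauchyGreen f g y *ᵥ coordGradient (fun z => N ⬝ᵥ g z) y = N ⬝ᵥ N := by
  rw [coordGradient_dotProduct_eq_inv_transpose_mulVec hf hg hfg, leftCauchyGreen,
    inv_transpose_mulVec_dotProduct_mul_transpose_mulVec
      (isUnit_det_of_right_inverse (jacobianMatrix_mul_jacobianMatrix_eq_one hf hg hfg))]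

end RightInverse

end Deformation

theorem straight_lines_map_to_rays_general {d : ℕ}
    (Ω ω : Set (Fin d → ℝ)) (hΩ : IsOpen Ω) (hω : IsOpen ω)
    (χ ψ : (Fin d → ℝ) → (Fin d → ℝ))
    (hχ : ContDiffOn ℝ 2 χ Ω) (hψ : ContDiffOn ℝ 2 ψ ω)
    (hmaps : Set.MapsTo χ Ω ω) (hmaps' : Set.MapsTo ψ ω Ω)
    (hinv : ∀ x ∈ ω, χ (ψ x) = x) (hinv' : ∀ X ∈ Ω, ψ (χ X) = X)
    (F : (Fin d → ℝ) → Matrix (Fin d) (Fin d) ℝ)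
    (hF : ∀ X, F X = Matrix.of fun i I => fderiv ℝ χ X (Pi.single I 1) i)
    (V2 : (Fin d → ℝ) → Matrix (Fin d) (Fin d) ℝ)
    (hV2 : ∀ x, V2 x = F (ψ x) * (F (ψ x))ᵀ)
    (N : Fin d → ℝ) (hN : N ⬝ᵥ N = 1) (X₀ : Fin d → ℝ)
    (x : ℝ → (Fin d → ℝ)) (hx : ∀ τ, x τ = χ (X₀ + τ • N))
    (s : ℝ → (Fin d → ℝ)) (hs : ∀ τ, s τ = ((F (X₀ + τ • N))⁻¹)ᵀ.mulVec N)
    (τ₀ : ℝ) (hτ₀ : X₀ + τ₀ • N ∈ Ω) :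
    HasDerivAt x ((V2 (x τ₀)).mulVec (s τ₀)) τ₀ ∧
    HasDerivAt s (fun k =>
      -(1 / 2) * ∑ i : Fin d, ∑ j : Fin d,
        s τ₀ i * fderiv ℝ (fun y => V2 y i j) (x τ₀) (Pi.single k 1) * s τ₀ j) τ₀ ∧
    s τ₀ ⬝ᵥ (V2 (x τ₀)).mulVec (s τ₀) = 1 := by
  obtain rfl : F = jacobianMatrix χ := funext hF
  obtain rfl : V2 = leftCauchyGreen χ ψ := funext hV2
  set S := coordGradient fun z => N ⬝ᵥ ψ z with hS
  have hχ₂ : ∀ y ∈ ω, ContDiffAt ℝ 2 χ (ψ y) := fun y hy =>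
    hχ.contDiffAt (hΩ.mem_nhds (hmaps' hy))
  have hψ₂ : ∀ y ∈ ω, ContDiffAt ℝ 2 ψ y := fun y hy => hψ.contDiffAt (hω.mem_nhds hy)
  have hχd := fun y hy => (hχ₂ y hy).differentiableAt two_ne_zero
  have hψd := fun y hy => (hψ₂ y hy).differentiableAt two_ne_zero
  have hχψ : ∀ y ∈ ω, ∀ᶠ z in 𝓝 y, χ (ψ z) = z := fun y hy =>
    eventually_of_mem (hω.mem_nhds hy) hinv
  have heikonal : ∀ y ∈ ω, S y ⬝ᵥ leftCauchyGreen χ ψ y *ᵥ S y = 1 := fun y hy => by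
    rw [coordGradient_dotProduct_mulVec_leftCauchyGreen (hχd y hy) (hψd y hy) (hχψ y hy), hN]
  have hsS : s =ᶠ[𝓝 τ₀] S ∘ x := by
    have hline : Continuous fun τ : ℝ => X₀ + τ • N := by fun_prop
    filter_upwards [hline.continuousAt.preimage_mem_nhds (hΩ.mem_nhds hτ₀)] with τ hτ
    have hSτ := coordGradient_dotProduct_eq_inv_transpose_mulVec
      (hχd _ (hmaps hτ)) (hψd _ (hmaps hτ)) (hχψ _ (hmaps hτ)) N
    rw [hinv' _ hτ] at hSτ
    rw [hs, Function.comp_apply, hx]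
    exact hSτ.symm
  have hy₀ : x τ₀ ∈ ω := hx τ₀ ▸ hmaps hτ₀
  have hvel : HasDerivAt x (leftCauchyGreen χ ψ (x τ₀) *ᵥ S (x τ₀)) τ₀ := by
    rw [hS, leftCauchyGreen_mulVec_coordGradient_dotProduct (hχd _ hy₀) (hψd _ hy₀) (hχψ _ hy₀),
      funext hx, hinv' _ hτ₀]
    have hχX := (hχ.contDiffAt (hΩ.mem_nhds hτ₀)).differentiableAt two_ne_zero
    exact hχX.hasFDerivAt.comp_hasDerivAt τ₀
      (((hasDerivAt_id τ₀).smul_const N).const_add X₀ |>.congr_deriv (one_smul ℝ N))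
  rw [hsS.eq_of_nhds]
  refine ⟨hvel, ?_, heikonal _ hy₀⟩
  exact (hvel.coordGradient_comp_of_eventually_dotProduct_mulVec_eq
    ((hψ₂ _ hy₀).const_dotProduct N)
    (differentiableAt_leftCauchyGreen_apply (hχ₂ _ hy₀) (hψd _ hy₀))
    (leftCauchyGreen_transpose χ ψ _)
    (eventually_of_mem (hω.mem_nhds hy₀) heikonal)).congr_of_eventuallyEq hsS

/-- Let `χ : Ω → ω` be a C² diffeomorphism with deformation gradient
`F` and `V² = F Fᵀ` (as a field on `ω`).  For a unit vector `N` and `X₀ ∈ Ω`, let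
`x(τ) = χ(X₀ + τ N)` and `s(τ) = F⁻ᵀ N` along the curve.  Then
`dx/dτ = V² s`, `ds_k/dτ = −(1/2) s_i ∂(V²)_{ij}/∂x_k s_j`, and `s·V²s = 1`. -/
theorem straight_lines_map_to_rays {d : ℕ}
    (Ω ω : Set (Fin d → ℝ)) (hΩ : IsOpen Ω) (hω : IsOpen ω)
    (χ ψ : (Fin d → ℝ) → (Fin d → ℝ))
    (hχ : ContDiffOn ℝ 2 χ Ω) (hψ : ContDiffOn ℝ 2 ψ ω)
    (hmaps : Set.MapsTo χ Ω ω) (hmaps' : Set.MapsTo ψ ω Ω)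
    (hinv : ∀ x ∈ ω, χ (ψ x) = x) (hinv' : ∀ X ∈ Ω, ψ (χ X) = X)
    (F : (Fin d → ℝ) → Matrix (Fin d) (Fin d) ℝ)
    (hF : ∀ X, F X = Matrix.of fun i I => fderiv ℝ χ X (Pi.single I 1) i)
    (hFunit : ∀ X ∈ Ω, IsUnit (F X))
    (V2 : (Fin d → ℝ) → Matrix (Fin d) (Fin d) ℝ)
    (hV2 : ∀ x, V2 x = F (ψ x) * (F (ψ x))ᵀ)
    (N : Fin d → ℝ) (hN : N ⬝ᵥ N = 1) (X₀ : Fin d → ℝ)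
    (x : ℝ → (Fin d → ℝ)) (hx : ∀ τ, x τ = χ (X₀ + τ • N))
    (s : ℝ → (Fin d → ℝ)) (hs : ∀ τ, s τ = ((F (X₀ + τ • N))⁻¹)ᵀ.mulVec N)
    (τ₀ : ℝ) (hτ₀ : X₀ + τ₀ • N ∈ Ω) :
    HasDerivAt x ((V2 (x τ₀)).mulVec (s τ₀)) τ₀ ∧
    HasDerivAt s (fun k =>
      -(1 / 2) * ∑ i : Fin d, ∑ j : Fin d,
        s τ₀ i * fderiv ℝ (fun y => V2 y i j) (x τ₀) (Pi.single k 1) * s τ₀ j) τ₀ ∧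
    s τ₀ ⬝ᵥ (V2 (x τ₀)).mulVec (s τ₀) = 1 :=
  straight_lines_map_to_rays_general Ω ω hΩ hω χ ψ hχ hψ hmaps hmaps' hinv hinv' F hF V2 hV2 N hN X₀
    x hx s hs τ₀ hτ₀
end
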